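/- Let A be self-adjoint on a complex Hilbert space H with spectral family {E_λ}, let Q₀ ∈ dom(A), and define ω² = ⟨Q₀, A Q₀⟩_H / ⟨Q₀, Q₀⟩_H. If ω² < 0, then for every α with 0 < α² < |ω²|, the spectral projection satisfies E_{-α²} Q₀ ≠ 0; consequently the solution of Q̈ = -A Q with initial data (Q₀, 0) satisfies lim_{t→∞} ‖Q̇_t‖² e^{-2αt} = ∞ for every α < |ω|. -/

import Mathlib

open scoped InnerProductSpace

/-!
Write `F = ‖Q‖²`, `M = Re ⟪Q, Q̇⟫` and `P = ‖Q̇‖²`. Conservation of the energy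
`‖Q̇‖² + Re ⟪Q, A Q⟫ = -c`, where `c = |ω²| ‖Q₀‖² > 0`, turns the equation of motion into
`F' = 2M` and `M' = 2P + c`, while Cauchy–Schwarz gives `M² ≤ F P`. These relations alone
make `(M / F)² + c / F` nondecreasing, from its initial value `c / F 0 = |ω²|`. As `F` grows at
least quadratically, `c / F → 0`, so for every `β < |ω|` eventually `M ≥ β F`; hence `F` grows
like `e^{2βt}`, and so does `P ≥ M² / F ≥ β² F`. The spectral claim is immediate: if
`E (-α²) Q₀ = 0` then `-α² ‖Q₀‖² ≤ Re ⟪Q₀, A Q₀⟫ = ω² ‖Q₀‖²`.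
-/

open Filter Set Real

lemma le_of_hasDerivAt_nonneg {f f' : ℝ → ℝ} {a b : ℝ} (hab : a ≤ b)
    (hf : ∀ s ∈ Icc a b, HasDerivAt f (f' s) s) (hf' : ∀ s ∈ Icc a b, 0 ≤ f' s) :
    f a ≤ f b :=
  monotoneOn_of_hasDerivWithinAt_nonneg (convex_Icc a b)
    (fun s hs => (hf s hs).continuousAt.continuousWithinAt)
    (fun s hs => (hf s (interior_subset hs)).hasDerivWithinAt)
    (fun s hs => hf' s (interior_subset hs)) ⟨le_rfl, hab⟩ ⟨hab, le_rfl⟩ hab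

lemma mul_exp_le_of_hasDerivAt {f f' : ℝ → ℝ} {a b k : ℝ} (hab : a ≤ b)
    (hf : ∀ s ∈ Icc a b, HasDerivAt f (f' s) s) (hf' : ∀ s ∈ Icc a b, k * f s ≤ f' s) :
    f a * exp (k * (b - a)) ≤ f b := by
  have hg : ∀ s ∈ Icc a b, HasDerivAt (fun t => f t * exp (-k * t))
      ((f' s - k * f s) * exp (-k * s)) s := fun s hs => by
    refine ((hf s hs).mul ((hasDerivAt_id s).const_mul (-k)).exp).congr_deriv ?_
    simp only [id]
    ring
  have key := le_of_hasDerivAt_nonneg hab hg fun s hs =>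
    mul_nonneg (sub_nonneg.2 (hf' s hs)) (exp_pos _).le
  calc f a * exp (k * (b - a)) = f a * exp (-k * a) * exp (k * b) := by
        rw [mul_assoc, ← exp_add]; congr 2; ring
    _ ≤ f b * exp (-k * b) * exp (k * b) := mul_le_mul_of_nonneg_right key (exp_pos _).le
    _ = f b := by rw [mul_assoc, ← exp_add]; simp

/-- The scalar system satisfied by `F = ‖Q‖²`, `M = Re ⟪Q, Q̇⟫`, `P = ‖Q̇‖²` for a solution of
`Q̈ = -A Q` starting at rest, with `c` minus its energy. -/
structure VirialSystem (F M P : ℝ → ℝ) (c : ℝ) : Prop where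
  hasDerivAt_F : ∀ t, HasDerivAt F (2 * M t) t
  hasDerivAt_M : ∀ t, HasDerivAt M (2 * P t + c) t
  P_nonneg : ∀ t, 0 ≤ P t
  sq_le_mul : ∀ t, M t ^ 2 ≤ F t * P t
  M_zero : M 0 = 0

namespace VirialSystem

variable {F M P : ℝ → ℝ} {c t β : ℝ}

lemma mul_le_M (h : VirialSystem F M P c) (ht : 0 ≤ t) : c * t ≤ M t := by
  have := le_of_hasDerivAt_nonneg (f := fun s => M s - c * s) (f' := fun s => 2 * P s) ht
    (fun s _ => ((h.hasDerivAt_M s).sub ((hasDerivAt_id s).const_mul c)).congr_deriv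
      (by ring))
    (fun s _ => by linarith [h.P_nonneg s])
  simp only [h.M_zero, mul_zero, sub_zero] at this
  linarith

lemma add_mul_sq_le_F (h : VirialSystem F M P c) (ht : 0 ≤ t) : F 0 + c * t ^ 2 ≤ F t := by
  have := le_of_hasDerivAt_nonneg (f := fun s => F s - c * s ^ 2)
    (f' := fun s => 2 * (M s - c * s)) ht
    (fun s _ => ((h.hasDerivAt_F s).sub ((hasDerivAt_pow 2 s).const_mul c)).congr_deriv
      (by norm_num; ring))
    (fun s hs => by linarith [h.mul_le_M hs.1])
  simp only [ne_eq, OfNat.ofNat_ne_zero, not_false_eq_true, zero_pow, mul_zero, sub_zero] at this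
  linarith

lemma F_pos (h : VirialSystem F M P c) (hc : 0 ≤ c) (hF0 : 0 < F 0) (ht : 0 ≤ t) : 0 < F t := by
  linarith [h.add_mul_sq_le_F ht, mul_nonneg hc (sq_nonneg t)]

lemma M_nonneg (h : VirialSystem F M P c) (hc : 0 ≤ c) (ht : 0 ≤ t) : 0 ≤ M t :=
  (mul_nonneg hc ht).trans (h.mul_le_M ht)

/-- `(M / F)² + c / F` is a Lyapunov function: its derivative is `4 M (F P - M²) / F³ ≥ 0`. -/
lemma div_le_rayleigh (h : VirialSystem F M P c) (hc : 0 ≤ c) (hF0 : 0 < F 0) (ht : 0 ≤ t) :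
    c / F 0 ≤ (M t / F t) ^ 2 + c / F t := by
  have hV : ∀ s ∈ Icc 0 t, HasDerivAt (fun s => (M s / F s) ^ 2 + c / F s)
      (4 * M s * (F s * P s - M s ^ 2) / F s ^ 3) s := fun s hs => by
    have hFs := (h.F_pos hc hF0 hs.1).ne'
    refine ((((h.hasDerivAt_M s).div (h.hasDerivAt_F s) hFs).pow 2).add
      ((hasDerivAt_const s c).div (h.hasDerivAt_F s) hFs)).congr_deriv ?_
    simp only [Pi.div_apply, Nat.cast_ofNat, Nat.add_one_sub_one, pow_one]
    field_simp
    ring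
  have := le_of_hasDerivAt_nonneg ht hV fun s hs =>
    div_nonneg (mul_nonneg (mul_nonneg (by norm_num) (h.M_nonneg hc hs.1))
      (sub_nonneg.2 (h.sq_le_mul s))) (pow_pos (h.F_pos hc hF0 hs.1) 3).le
  simpa [h.M_zero] using this

lemma eventually_mul_le_M (h : VirialSystem F M P c) (hc : 0 < c) (hF0 : 0 < F 0)
    (hβ : 0 ≤ β) (hβc : β ^ 2 < c / F 0) : ∀ᶠ t in atTop, β * F t ≤ M t := by
  have hFtop : Tendsto F atTop atTop :=
    tendsto_atTop_mono' _ ((eventually_ge_atTop 0).mono fun t ht => h.add_mul_sq_le_F ht)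
      (tendsto_atTop_add_const_left _ _ ((tendsto_pow_atTop two_ne_zero).const_mul_atTop hc))
  have hsmall : ∀ᶠ t in atTop, c / F t < c / F 0 - β ^ 2 :=
    (tendsto_const_nhds.div_atTop hFtop).eventually (gt_mem_nhds (sub_pos.2 hβc))
  filter_upwards [hsmall, eventually_ge_atTop 0] with t hlt ht
  have hFt := h.F_pos hc.le hF0 ht
  have hsq : β ^ 2 ≤ (M t / F t) ^ 2 := by linarith [h.div_le_rayleigh hc.le hF0 ht]
  rw [← le_div_iff₀ hFt]
  exact (pow_le_pow_iff_left₀ hβ (div_nonneg (h.M_nonneg hc.le ht) hFt.le) two_ne_zero).1 hsq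

lemma exists_mul_exp_le_P (h : VirialSystem F M P c) (hc : 0 < c) (hF0 : 0 < F 0)
    (hβ : 0 < β) (hβc : β ^ 2 < c / F 0) :
    ∃ K > 0, ∀ᶠ t in atTop, K * exp (2 * β * t) ≤ P t := by
  obtain ⟨T, hT⟩ := ((h.eventually_mul_le_M hc hF0 hβ.le hβc).and
    (eventually_ge_atTop 0)).exists_forall_of_atTop
  have hFT := h.F_pos hc.le hF0 (hT T le_rfl).2
  refine ⟨β ^ 2 * F T * exp (-(2 * β * T)), by positivity, ?_⟩
  filter_upwards [eventually_ge_atTop T] with t ht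
  have hFt := h.F_pos hc.le hF0 ((hT T le_rfl).2.trans ht)
  have hgrowth : F T * exp (2 * β * (t - T)) ≤ F t :=
    mul_exp_le_of_hasDerivAt ht (fun s _ => h.hasDerivAt_F s)
      (fun s hs => by linarith [(hT s hs.1).1])
  have hP : β ^ 2 * F t ≤ P t := by
    have hMt := (hT t ht).1
    have : (β * F t) ^ 2 ≤ F t * P t :=
      (pow_le_pow_left₀ (by positivity) hMt 2).trans (h.sq_le_mul t)
    nlinarith
  calc β ^ 2 * F T * exp (-(2 * β * T)) * exp (2 * β * t)
      = β ^ 2 * (F T * exp (2 * β * (t - T))) := by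
        rw [mul_assoc, ← exp_add, mul_assoc]; ring_nf
    _ ≤ β ^ 2 * F t := by gcongr
    _ ≤ P t := hP

lemma tendsto_P_mul_exp_atTop (h : VirialSystem F M P c) (hc : 0 < c) (hF0 : 0 < F 0) {α : ℝ}
    (hα : 0 < α) (hαc : α ^ 2 < c / F 0) :
    Tendsto (fun t => P t * exp (-2 * α * t)) atTop atTop := by
  obtain ⟨β, hαβ, hβ⟩ := exists_between ((lt_sqrt hα.le).2 hαc)
  obtain ⟨K, hK, hKP⟩ := h.exists_mul_exp_le_P hc hF0 (hα.trans hαβ)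
    ((lt_sqrt (hα.trans hαβ).le).1 hβ)
  refine tendsto_atTop_mono' _ (hKP.mono fun t ht => ?_)
    ((tendsto_exp_atTop.comp
      (tendsto_id.const_mul_atTop (by linarith : 0 < 2 * (β - α)))).const_mul_atTop hK)
  calc _ = K * exp (2 * β * t) * exp (-2 * α * t) := by
        rw [mul_assoc, ← exp_add, Function.comp_apply, id_eq]; ring_nf
    _ ≤ P t * exp (-2 * α * t) := by gcongr

end VirialSystem

section WaveEquation

variable {H : Type*} [NormedAddCommGroup H] [InnerProductSpace ℂ H]

lemma HasDerivAt.re_inner {f g : ℝ → H} {f' g' : H} {x : ℝ} (hf : HasDerivAt f f' x)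
    (hg : HasDerivAt g g' x) :
    HasDerivAt (fun t => (⟪f t, g t⟫_ℂ).re) ((⟪f x, g'⟫_ℂ).re + (⟪f', g x⟫_ℂ).re) x := by
  have h := Complex.reCLM.hasFDerivAt.comp_hasDerivAt x (hf.inner ℂ hg)
  simp only [Function.comp_def, Complex.reCLM_apply] at h
  exact h

lemma HasDerivAt.norm_sq_of_complex {f : ℝ → H} {f' : H} {x : ℝ} (hf : HasDerivAt f f' x) :
    HasDerivAt (fun t => ‖f t‖ ^ 2) (2 * (⟪f x, f'⟫_ℂ).re) x := by
  refine (hf.re_inner hf).congr_deriv ?_ |>.congr_of_eventuallyEq ?_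
  · rw [← inner_conj_symm, Complex.conj_re]; ring
  · exact Eventually.of_forall fun t => (inner_self_eq_norm_sq (𝕜 := ℂ) (f t)).symm

variable [CompleteSpace H] {A : H →L[ℂ] H} {Q Q' : ℝ → H}

lemma wave_energy_eq (hA : IsSelfAdjoint A) (hQ : ∀ t, HasDerivAt Q (Q' t) t)
    (hQ' : ∀ t, HasDerivAt Q' (-A (Q t)) t) (t : ℝ) :
    ‖Q' t‖ ^ 2 + (⟪Q t, A (Q t)⟫_ℂ).re = ‖Q' 0‖ ^ 2 + (⟪Q 0, A (Q 0)⟫_ℂ).re := by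
  have hAQ : ∀ t, HasDerivAt (fun s => A (Q s)) (A (Q' t)) t := fun t =>
    (A.restrictScalars ℝ).hasFDerivAt.comp_hasDerivAt t (hQ t)
  have hderiv : ∀ t, HasDerivAt (fun s => ‖Q' s‖ ^ 2 + (⟪Q s, A (Q s)⟫_ℂ).re) 0 t := fun t => by
    refine ((hQ' t).norm_sq_of_complex.add ((hQ t).re_inner (hAQ t))).congr_deriv ?_
    have hsym : ⟪A (Q t), Q' t⟫_ℂ = ⟪Q t, A (Q' t)⟫_ℂ := hA.isSymmetric _ _
    rw [← hsym, ← inner_conj_symm (A (Q t)), Complex.conj_re, inner_neg_right, Complex.neg_re]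
    ring
  exact is_const_of_deriv_eq_zero (fun s => (hderiv s).differentiableAt)
    (fun s => (hderiv s).deriv) t 0

lemma virialSystem_of_wave (hA : IsSelfAdjoint A) (hQ : ∀ t, HasDerivAt Q (Q' t) t)
    (hQ' : ∀ t, HasDerivAt Q' (-A (Q t)) t) (hQ'0 : Q' 0 = 0) :
    VirialSystem (fun t => ‖Q t‖ ^ 2) (fun t => (⟪Q t, Q' t⟫_ℂ).re) (fun t => ‖Q' t‖ ^ 2)
      (-(⟪Q 0, A (Q 0)⟫_ℂ).re) where
  hasDerivAt_F t := (hQ t).norm_sq_of_complex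
  hasDerivAt_M t := by
    have hE := wave_energy_eq hA hQ hQ' t
    rw [hQ'0, norm_zero] at hE
    have hP : (⟪Q' t, Q' t⟫_ℂ).re = ‖Q' t‖ ^ 2 := inner_self_eq_norm_sq (𝕜 := ℂ) _
    refine ((hQ t).re_inner (hQ' t)).congr_deriv ?_
    rw [inner_neg_right, Complex.neg_re, hP]
    linarith
  P_nonneg t := by positivity
  sq_le_mul t := by
    have hCS := (Complex.abs_re_le_norm _).trans (norm_inner_le_norm (𝕜 := ℂ) (Q t) (Q' t))
    calc (⟪Q t, Q' t⟫_ℂ).re ^ 2 = |(⟪Q t, Q' t⟫_ℂ).re| ^ 2 := (sq_abs _).symm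
      _ ≤ (‖Q t‖ * ‖Q' t‖) ^ 2 := by gcongr
      _ = ‖Q t‖ ^ 2 * ‖Q' t‖ ^ 2 := mul_pow _ _ _
  M_zero := by simp [hQ'0]

end WaveEquation

theorem variational_principle_for_instability_general
    {H : Type*} [NormedAddCommGroup H] [InnerProductSpace ℂ H] [CompleteSpace H]
    (A : H →L[ℂ] H) (hA : IsSelfAdjoint A)
    (E : ℝ → H →L[ℂ] H)
    (hbound : ∀ (l : ℝ) (x : H), E l x = 0 → l * ‖x‖ ^ 2 ≤ (⟪x, A x⟫_ℂ).re)
    (Q₀ : H) (hQ₀ : Q₀ ≠ 0)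
    (ω2 : ℝ) (hω2 : ω2 = (⟪Q₀, A Q₀⟫_ℂ).re / ‖Q₀‖ ^ 2) (hneg : ω2 < 0)
    (Q Q' Q'' : ℝ → H)
    (hd1 : ∀ t, HasDerivAt Q (Q' t) t)
    (hd2 : ∀ t, HasDerivAt Q' (Q'' t) t)
    (h0 : Q 0 = Q₀) (h0' : Q' 0 = 0)
    (hode : ∀ t, Q'' t = -(A (Q t))) :
    (∀ α : ℝ, 0 < α → α ^ 2 < -ω2 → E (-α ^ 2) Q₀ ≠ 0) ∧
    (∀ α : ℝ, 0 < α → α ^ 2 < -ω2 →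
      Filter.Tendsto (fun t => ‖Q' t‖ ^ 2 * Real.exp (-2 * α * t))
        Filter.atTop Filter.atTop) := by
  have hQ₀pos : 0 < ‖Q₀‖ ^ 2 := by positivity
  have hRayleigh : (⟪Q₀, A Q₀⟫_ℂ).re = ω2 * ‖Q₀‖ ^ 2 := by
    rw [hω2, div_mul_cancel₀ _ hQ₀pos.ne']
  refine ⟨fun α _ hα2 hE => ?_, fun α hα hα2 => ?_⟩
  · have := hbound _ _ hE
    rw [hRayleigh] at this
    nlinarith
  · have hF0 : 0 < ‖Q 0‖ ^ 2 := h0 ▸ hQ₀pos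
    have hc : -(⟪Q 0, A (Q 0)⟫_ℂ).re = -ω2 * ‖Q 0‖ ^ 2 := by rw [h0, hRayleigh]; ring
    have h := virialSystem_of_wave hA hd1 (fun t => hode t ▸ hd2 t) h0'
    rw [hc] at h
    refine h.tendsto_P_mul_exp_atTop (by nlinarith) hF0 hα ?_
    rwa [mul_div_cancel_right₀ _ hF0.ne']

/-- **Variational principle for instability (Theorem 2 of Prabhu–Wald, abstract form).**
Let `A` be self-adjoint on a complex Hilbert space with spectral family `{E λ}` (so that
`A ≥ λ` on the kernel of `E λ`), `Q₀ ∈ dom A` nonzero, and set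
`ω² = ⟨Q₀, A Q₀⟩ / ⟨Q₀, Q₀⟩`.  If `ω² < 0`, then for every `α` with `0 < α² < |ω²|`
the spectral projection satisfies `E (-α²) Q₀ ≠ 0`; consequently the solution of
`Q̈ = -A Q` with initial data `(Q₀, 0)` satisfies
`lim_{t→∞} ‖Q̇ t‖² e^{-2αt} = ∞` for every such `α < |ω|`. -/
theorem variational_principle_for_instability
    {H : Type*} [NormedAddCommGroup H] [InnerProductSpace ℂ H] [CompleteSpace H]
    (A : H →L[ℂ] H) (hA : IsSelfAdjoint A)
    (E : ℝ → H →L[ℂ] H)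
    (hproj : ∀ l, IsIdempotentElem (E l) ∧ IsSelfAdjoint (E l))
    (hbound : ∀ (l : ℝ) (x : H), E l x = 0 → l * ‖x‖ ^ 2 ≤ (⟪x, A x⟫_ℂ).re)
    (Q₀ : H) (hQ₀ : Q₀ ≠ 0)
    (ω2 : ℝ) (hω2 : ω2 = (⟪Q₀, A Q₀⟫_ℂ).re / ‖Q₀‖ ^ 2) (hneg : ω2 < 0)
    (Q Q' Q'' : ℝ → H)
    (hd1 : ∀ t, HasDerivAt Q (Q' t) t)
    (hd2 : ∀ t, HasDerivAt Q' (Q'' t) t)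
    (h0 : Q 0 = Q₀) (h0' : Q' 0 = 0)
    (hode : ∀ t, Q'' t = -(A (Q t))) :
    (∀ α : ℝ, 0 < α → α ^ 2 < -ω2 → E (-α ^ 2) Q₀ ≠ 0) ∧
    (∀ α : ℝ, 0 < α → α ^ 2 < -ω2 →
      Filter.Tendsto (fun t => ‖Q' t‖ ^ 2 * Real.exp (-2 * α * t))
        Filter.atTop Filter.atTop) :=
  variational_principle_for_instability_general A hA E hbound Q₀ hQ₀ ω2 hω2 hneg Q Q' Q'' hd1 hd2 h0
    h0' hode
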